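/- For a strict partition λ=(λ₁,λ₂,…,λ_ℓ) and a positive integer s, the doubled distinct partition λλ is a doubled distinct s-core if and only if both of the following hold: (a) λ is an s̄-core, and (b) if s is even then s/2 is not a part of λ. -/

import Mathlib

/-- A strict partition, encoded as a strictly decreasing list of positive integers. -/
def IsStrictPartition (l : List ℕ) : Prop :=
  List.Pairwise (· > ·) l ∧ ∀ x ∈ l, 0 < x

/-- The set of bar lengths in the (0-indexed) `i`-th row of a strict partition `l`:
`{λᵢ + λⱼ : i < j ≤ ℓ} ∪ ({1,…,λᵢ} \ {λᵢ − λⱼ : i < j ≤ ℓ})`. -/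
def barLengths (l : List ℕ) (i : ℕ) : Finset ℕ :=
  ((Finset.Ioo i l.length).image fun j => l.getD i 0 + l.getD j 0) ∪
    (Finset.Icc 1 (l.getD i 0) \
      ((Finset.Ioo i l.length).image fun j => l.getD i 0 - l.getD j 0))

/-- `l` is an `s`-bar-core: `s` is not a bar length in any row. -/
def IsBarCore (l : List ℕ) (s : ℕ) : Prop :=
  ∀ i, i < l.length → s ∉ barLengths l i

/-- The shifted hook length of the box in row `i`, column `c` (both 0-indexed, where the
`i`-th row of the shifted Young diagram occupies columns `i, …, λᵢ + i − 1`): the number of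
boxes to its right in row `i` together with itself, plus the number of boxes below it in
column `c`, plus the number of boxes of row `c + 1` if that row exists. -/
def shiftedHook (l : List ℕ) (i c : ℕ) : ℕ :=
  (l.getD i 0 + i - c) +
    ((Finset.Ioc i c).filter fun i' => c < l.getD i' 0 + i').card +
    l.getD (c + 1) 0

/-- `l` is an `s`-CSYD: no shifted hook length of the shifted Young diagram `S(λ)`
is divisible by `s`. -/
def IsCSYD (l : List ℕ) (s : ℕ) : Prop :=
  ∀ i c, i < l.length → i ≤ c → c < l.getD i 0 + i → ¬ s ∣ shiftedHook l i c

/-- The `i`-th part (0-indexed) of the doubled distinct partition `λλ`, read off from the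
Frobenius symbol `(λ₁,…,λ_ℓ ; λ₁−1,…,λ_ℓ−1)`: for `i < ℓ` the part is `λᵢ + i + 1`
(1-indexed: `λᵢ + i`), and for `ℓ ≤ i` the part is determined by the column lengths
`λⱼ + j − 1` (1-indexed). -/
def ddPart (l : List ℕ) (i : ℕ) : ℕ :=
  if i < l.length then l.getD i 0 + i + 1
  else ((Finset.range l.length).filter fun j => i + 1 ≤ l.getD j 0 + j).card

/-- The doubled distinct partition `λλ` of a strict partition `l`, as a list of parts. -/
def doubledDistinct (l : List ℕ) : List ℕ :=
  (List.range (l.getD 0 0)).map (ddPart l)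

/-- Ordinary hook length of the box in row `i`, column `j` (0-indexed) of a partition `m`. -/
def hookLen (m : List ℕ) (i j : ℕ) : ℕ :=
  (m.getD i 0 - j) + ((Finset.Ioo i m.length).filter fun i' => j < m.getD i' 0).card

/-- `m` is an `s`-core: no hook length is divisible by `s`. -/
def IsCore (m : List ℕ) (s : ℕ) : Prop :=
  ∀ i j, i < m.length → j < m.getD i 0 → ¬ s ∣ hookLen m i j

/-- NE lattice paths from `(0,0)` to `(a,b)`, encoded as lists of steps where
`false` is an east step `E = (1,0)` and `true` is a north step `N = (0,1)`. -/
def NEPaths (a b : ℕ) : Set (List Bool) :=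
  {w | w.count false = a ∧ w.count true = b}

/-- A step of a free Motzkin path. -/
inductive MStep : Type
  | U : MStep
  | F : MStep
  | D : MStep
deriving DecidableEq

/-- The height change of a step: `U = (1,1)`, `F = (1,0)`, `D = (1,−1)`. -/
def MStep.ht : MStep → ℤ
  | .U => 1
  | .F => 0
  | .D => -1

/-- Free Motzkin paths of type `(p,q)`: lattice paths from `(0,0)` to `(p,q)` with steps
`U = (1,1)`, `F = (1,0)` and `D = (1,−1)`, encoded as lists of steps. -/
def FreeMotzkin (p : ℕ) (q : ℤ) : Set (List MStep) :=
  {w | w.length = p ∧ (w.map MStep.ht).sum = q}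

/-- `multinom n a b c = n! / (a! · b! · c!)`. -/
def multinom (n a b c : ℕ) : ℕ :=
  n.factorial / (a.factorial * b.factorial * c.factorial)

lemma filt_dc {n : ℕ} (P : ℕ → Prop) [DecidablePred P]
    (hdc : ∀ u v, u ≤ v → v < n → P v → P u) (t : ℕ) (ht : t < n) :
    P t ↔ t < ((Finset.range n).filter P).card := by
  constructor
  · intro hp
    have hsub : Finset.range (t + 1) ⊆ (Finset.range n).filter P := by
      intro u hu
      simp only [Finset.mem_range] at hu
      simp only [Finset.mem_filter, Finset.mem_range]
      exact ⟨lt_of_le_of_lt (Nat.le_of_lt_succ hu) ht,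
        hdc u t (Nat.le_of_lt_succ hu) ht hp⟩
    have := Finset.card_le_card hsub
    simpa using this
  · intro hc
    by_contra hp
    have hsub : (Finset.range n).filter P ⊆ Finset.range t := by
      intro u hu
      simp only [Finset.mem_filter, Finset.mem_range] at hu
      simp only [Finset.mem_range]
      by_contra h
      exact hp (hdc t u (le_of_not_gt h) hu.1 hu.2)
    have := Finset.card_le_card hsub
    simp only [Finset.card_range] at this
    omega

lemma descend (B : Finset ℕ) (s : ℕ) :
    ∀ k x y, x ∈ B → y ∉ B → x = y + k * s → 1 ≤ k →
      ∃ z ∈ B, s ≤ z ∧ z - s ∉ B := by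
  intro k
  induction k with
  | zero => omega
  | succ k ih =>
    intro x y hx hy hxy _
    have hmul : (k + 1) * s = k * s + s := by ring
    by_cases h : x - s ∈ B
    · rcases Nat.eq_zero_or_pos k with hk | hk
      · subst hk
        have : x - s = y := by omega
        rw [this] at h
        exact absurd h hy
      · exact ih (x - s) y h hy (by omega) hk
    · exact ⟨x, hx, by omega, h⟩

def betaFn (m : List ℕ) (i : ℕ) : ℕ := m.getD i 0 + (m.length - 1 - i)

def betaSet (m : List ℕ) : Finset ℕ := (Finset.range m.length).image (betaFn m)

lemma betaFn_gap (m : List ℕ)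
    (hmono : ∀ i j, i ≤ j → j < m.length → m.getD j 0 ≤ m.getD i 0)
    (t t' : ℕ) (h1 : t ≤ t') (h2 : t' < m.length) :
    betaFn m t' + (t' - t) ≤ betaFn m t := by
  have := hmono t t' h1 h2
  simp only [betaFn]
  omega

lemma not_core_of_beta_gap (m : List ℕ) (s : ℕ) (hs : 0 < s)
    (hmono : ∀ i j, i ≤ j → j < m.length → m.getD j 0 ≤ m.getD i 0)
    (x : ℕ) (hx : x ∈ betaSet m) (hsx : s ≤ x) (hy : x - s ∉ betaSet m) :
    ¬ IsCore m s := by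
  set L := m.length with hL
  set y := x - s with hydef
  obtain ⟨i, hi', hbi⟩ := Finset.mem_image.mp hx
  rw [Finset.mem_range] at hi'
  set c := ((Finset.range L).filter (fun t => y < betaFn m t)).card with hc
  have hdcB : ∀ u v, u ≤ v → v < L → y < betaFn m v → y < betaFn m u := by
    intro u v huv hv h
    have := betaFn_gap m hmono u v huv hv
    omega
  have hS1c : ∀ t, t < L → (y < betaFn m t ↔ t < c) := fun t ht => filt_dc _ hdcB t ht
  have hcL : c ≤ L := by
    calc c ≤ (Finset.range L).card := Finset.card_filter_le _ _
    _ = L := Finset.card_range L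
  have hLyc : L ≤ y + c := by
    have hcompl : c + ((Finset.range L).filter (fun t => ¬ y < betaFn m t)).card = L := by
      rw [hc, Finset.card_filter_add_card_filter_not, Finset.card_range]
    have hcard : ((Finset.range L).filter (fun t => ¬ y < betaFn m t)).card ≤
        (Finset.range y).card := by
      apply Finset.card_le_card_of_injOn (betaFn m)
      · intro t ht
        simp only [Finset.coe_filter, Set.mem_setOf_eq, Finset.mem_range, not_lt] at ht
        have hne : betaFn m t ≠ y := by
          intro h
          exact hy (Finset.mem_image.mpr ⟨t, Finset.mem_range.mpr ht.1, h⟩)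
        simp only [Finset.mem_coe, Finset.mem_range]
        omega
      · intro t ht t' ht' heq
        simp only [Finset.coe_filter, Set.mem_setOf_eq, Finset.mem_range] at ht ht'
        rcases lt_trichotomy t t' with h | h | h
        · have := betaFn_gap m hmono t t' (le_of_lt h) ht'.1
          omega
        · exact h
        · have := betaFn_gap m hmono t' t (le_of_lt h) ht.1
          omega
    rw [Finset.card_range] at hcard
    omega
  set j := y + c - L with hj
  have hkey : ∀ t, t < L → (j < m.getD t 0 ↔ t < c) := by
    intro t ht
    constructor
    · intro hjm
      by_contra hnc
      push_neg at hnc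
      have hcL' : c < L := lt_of_le_of_lt hnc ht
      have h1 : ¬ y < betaFn m c := by rw [hS1c c hcL']; omega
      have h2 : betaFn m c ≠ y := fun h =>
        hy (Finset.mem_image.mpr ⟨c, Finset.mem_range.mpr hcL', h⟩)
      have h3 := betaFn_gap m hmono c t hnc ht
      simp only [betaFn, ← hL] at h1 h2 h3
      omega
    · intro htc
      have hc1 : c - 1 < L := by omega
      have h1 : y < betaFn m (c - 1) := (hS1c _ hc1).mpr (by omega)
      have h3 := betaFn_gap m hmono t (c - 1) (by omega) hc1
      simp only [betaFn, ← hL] at h1 h3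
      omega
  have hic : i < c := by
    rw [← hS1c i hi', hbi]
    omega
  have hjm : j < m.getD i 0 := (hkey i hi').mpr hic
  intro hcore
  apply hcore i j hi' hjm
  have hfilter : (Finset.Ioo i L).filter (fun t => j < m.getD t 0) = Finset.Ioo i c := by
    ext t
    simp only [Finset.mem_filter, Finset.mem_Ioo]
    constructor
    · rintro ⟨⟨h1, h2⟩, h3⟩
      exact ⟨h1, (hkey t h2).mp h3⟩
    · rintro ⟨h1, h2⟩
      exact ⟨⟨h1, lt_of_lt_of_le h2 hcL⟩, (hkey t (lt_of_lt_of_le h2 hcL)).mpr h2⟩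
  have heq : hookLen m i j = s := by
    rw [hookLen, ← hL, hfilter, Nat.card_Ioo]
    simp only [betaFn, ← hL] at hbi
    omega
  rw [heq]

lemma beta_gap_of_not_core (m : List ℕ) (s : ℕ) (hs : 0 < s)
    (hmono : ∀ i j, i ≤ j → j < m.length → m.getD j 0 ≤ m.getD i 0)
    (i j : ℕ) (hi : i < m.length) (hj : j < m.getD i 0) (hdvd : s ∣ hookLen m i j) :
    ∃ z ∈ betaSet m, s ≤ z ∧ z - s ∉ betaSet m := by
  set L := m.length with hL
  set K := ((Finset.range L).filter (fun t => j < m.getD t 0)).card with hK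
  have hdc : ∀ u v, u ≤ v → v < L → j < m.getD v 0 → j < m.getD u 0 := fun u v huv hv h =>
    lt_of_lt_of_le h (hmono u v huv hv)
  have hS1 : ∀ t, t < L → (j < m.getD t 0 ↔ t < K) := fun t ht => filt_dc _ hdc t ht
  have hKL : K ≤ L := by
    calc K ≤ (Finset.range L).card := Finset.card_filter_le _ _
    _ = L := Finset.card_range L
  have hiK : i < K := (hS1 i hi).mp hj
  set y := j + (L - K) with hy
  have hfilter : (Finset.Ioo i L).filter (fun t => j < m.getD t 0) = Finset.Ioo i K := by
    ext t
    simp only [Finset.mem_filter, Finset.mem_Ioo]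
    constructor
    · rintro ⟨⟨h1, h2⟩, h3⟩
      exact ⟨h1, (hS1 t h2).mp h3⟩
    · rintro ⟨h1, h2⟩
      exact ⟨⟨h1, lt_of_lt_of_le h2 hKL⟩, (hS1 t (lt_of_lt_of_le h2 hKL)).mpr h2⟩
  have hhook : hookLen m i j + y = betaFn m i := by
    rw [hookLen, ← hL, hfilter, Nat.card_Ioo]
    simp only [betaFn, ← hL]
    omega
  have hyB : y ∉ betaSet m := by
    intro hmem
    obtain ⟨t, ht', hbt⟩ := Finset.mem_image.mp hmem
    rw [Finset.mem_range] at ht'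
    simp only [betaFn, ← hL] at hbt
    by_cases h : t < K
    · have := (hS1 t ht').mpr h
      omega
    · have : ¬ j < m.getD t 0 := by rw [hS1 t ht']; exact h
      omega
  have hpos : 1 ≤ hookLen m i j := by
    rw [hookLen]
    omega
  obtain ⟨k, hk⟩ := hdvd
  have hk1 : 1 ≤ k := by
    rcases Nat.eq_zero_or_pos k with h | h
    · rw [h, Nat.mul_zero] at hk
      omega
    · exact h
  have hmc : s * k = k * s := Nat.mul_comm s k
  exact descend (betaSet m) s k (betaFn m i) y
    (Finset.mem_image.mpr ⟨i, Finset.mem_range.mpr hi, rfl⟩) hyB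
    (by rw [← hhook, hk]; ring) hk1

lemma core_iff_beta (m : List ℕ) (s : ℕ) (hs : 0 < s)
    (hmono : ∀ i j, i ≤ j → j < m.length → m.getD j 0 ≤ m.getD i 0) :
    IsCore m s ↔ ∀ x ∈ betaSet m, s ≤ x → x - s ∈ betaSet m := by
  constructor
  · intro hcore x hx hsx
    by_contra hy
    exact not_core_of_beta_gap m s hs hmono x hx hsx hy hcore
  · intro hbeta i j hi hj hdvd
    obtain ⟨z, hz, hsz, hzs⟩ := beta_gap_of_not_core m s hs hmono i j hi hj hdvd
    exact hzs (hbeta z hz hsz)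

lemma sp_getD_lt {l : List ℕ} (hl : IsStrictPartition l) {i j : ℕ} (hij : i < j)
    (hj : j < l.length) : l.getD j 0 < l.getD i 0 := by
  rw [List.getD_eq_getElem l 0 hj, List.getD_eq_getElem l 0 (lt_trans hij hj)]
  exact List.Pairwise.rel_get_of_lt hl.1 (by simpa using hij)

lemma sp_pos {l : List ℕ} (hl : IsStrictPartition l) {i : ℕ} (hi : i < l.length) :
    0 < l.getD i 0 := by
  rw [List.getD_eq_getElem l 0 hi]
  exact hl.2 _ (List.getElem_mem hi)

lemma sp_gap {l : List ℕ} (hl : IsStrictPartition l) :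
    ∀ d i, i + d < l.length → l.getD (i + d) 0 + d ≤ l.getD i 0 := by
  intro d
  induction d with
  | zero => intro i _; simp
  | succ d ih =>
    intro i h
    have h1 : l.getD (i + d + 1) 0 < l.getD (i + d) 0 :=
      sp_getD_lt hl (by omega) (by omega)
    have h2 := ih i (by omega)
    have h3 : i + (d + 1) = i + d + 1 := by omega
    rw [h3]
    omega

lemma sp_gap' {l : List ℕ} (hl : IsStrictPartition l) {i j : ℕ} (hij : i ≤ j)
    (hj : j < l.length) : l.getD j 0 + (j - i) ≤ l.getD i 0 := by
  have h := sp_gap hl (j - i) i (by omega)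
  have h2 : i + (j - i) = j := by omega
  rw [h2] at h
  exact h

lemma sp_le_head {l : List ℕ} (hl : IsStrictPartition l) {i : ℕ} (hi : i < l.length) :
    l.getD i 0 ≤ l.getD 0 0 := by
  have := sp_gap' hl (Nat.zero_le i) hi
  omega

lemma sp_len_le {l : List ℕ} (hl : IsStrictPartition l) (hne : l ≠ []) :
    l.length ≤ l.getD 0 0 := by
  have hlen : 0 < l.length := List.length_pos_iff.mpr hne
  have h1 := sp_gap' hl (Nat.zero_le (l.length - 1)) (by omega)
  have h2 := sp_pos hl (show l.length - 1 < l.length by omega)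
  omega

lemma sp_mem_iff {l : List ℕ} (a : ℕ) :
    a ∈ l ↔ ∃ i, i < l.length ∧ l.getD i 0 = a := by
  rw [List.mem_iff_getElem]
  constructor
  · rintro ⟨i, hi, rfl⟩
    exact ⟨i, hi, List.getD_eq_getElem l 0 hi⟩
  · rintro ⟨i, hi, h⟩
    exact ⟨i, hi, by rw [← List.getD_eq_getElem l 0 hi]; exact h⟩

lemma sp_mem_le_head {l : List ℕ} (hl : IsStrictPartition l) {a : ℕ} (ha : a ∈ l) :
    a ≤ l.getD 0 0 := by
  obtain ⟨i, hi, rfl⟩ := (sp_mem_iff a).mp ha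
  exact sp_le_head hl hi

lemma sp_wmono {l : List ℕ} (hl : IsStrictPartition l) {i j : ℕ} (hij : i ≤ j)
    (hj : j < l.length) : l.getD j 0 + j ≤ l.getD i 0 + i := by
  have := sp_gap' hl hij hj
  omega

lemma dd_length (l : List ℕ) : (doubledDistinct l).length = l.getD 0 0 := by
  simp [doubledDistinct]

lemma dd_getD (l : List ℕ) {i : ℕ} (hi : i < l.getD 0 0) :
    (doubledDistinct l).getD i 0 = ddPart l i := by
  rw [List.getD_eq_getElem _ 0 (by simpa [doubledDistinct] using hi)]
  simp [doubledDistinct]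

lemma ddPart_le (l : List ℕ) {i : ℕ} (hi : l.length ≤ i) : ddPart l i ≤ l.length := by
  rw [ddPart, if_neg (by omega)]
  calc ((Finset.range l.length).filter fun j => i + 1 ≤ l.getD j 0 + j).card
      ≤ (Finset.range l.length).card := Finset.card_filter_le _ _
    _ = l.length := Finset.card_range _

lemma dd_mono {l : List ℕ} (hl : IsStrictPartition l) :
    ∀ i j, i ≤ j → j < (doubledDistinct l).length →
      (doubledDistinct l).getD j 0 ≤ (doubledDistinct l).getD i 0 := by
  intro i j hij hj
  rw [dd_length] at hj
  rw [dd_getD l hj, dd_getD l (by omega)]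
  by_cases hjl : j < l.length
  · rw [ddPart, if_pos hjl, ddPart, if_pos (by omega)]
    have := sp_wmono hl hij hjl
    omega
  · push_neg at hjl
    by_cases hil : i < l.length
    · simp only [ddPart]
      rw [if_neg (by omega), if_pos hil]
      have h1 := ddPart_le l hjl
      rw [ddPart, if_neg (by omega)] at h1
      have h2 := sp_gap' hl (show i ≤ l.length - 1 by omega)
        (show l.length - 1 < l.length by omega)
      have h3 := sp_pos hl (show l.length - 1 < l.length by omega)
      omega
    · push_neg at hil
      rw [ddPart, if_neg (by omega), ddPart, if_neg (by omega)]
      apply Finset.card_le_card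
      intro t ht
      simp only [Finset.mem_filter] at ht ⊢
      exact ⟨ht.1, by omega⟩

def Tset (l : List ℕ) : Finset ℕ :=
  (Finset.range l.length).image (fun i => l.getD 0 0 + l.getD i 0) ∪
    (Finset.range (l.getD 0 0) \
      (Finset.range l.length).image (fun i => l.getD 0 0 - l.getD i 0))

lemma Tset_card {l : List ℕ} (hl : IsStrictPartition l) (hne : l ≠ []) :
    (Tset l).card = l.getD 0 0 := by
  have hlenpos : 0 < l.length := List.length_pos_iff.mpr hne
  have hlM : l.length ≤ l.getD 0 0 := sp_len_le hl hne
  have h1 : ((Finset.range l.length).image (fun i => l.getD 0 0 + l.getD i 0)).card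
      = l.length := by
    rw [Finset.card_image_of_injOn, Finset.card_range]
    intro a ha b hb hab
    simp only [Finset.coe_range, Set.mem_Iio] at ha hb
    simp only [add_right_inj] at hab
    rcases lt_trichotomy a b with h | h | h
    · have := sp_getD_lt hl h hb; omega
    · exact h
    · have := sp_getD_lt hl h ha; omega
  have h2 : ((Finset.range l.length).image (fun i => l.getD 0 0 - l.getD i 0)).card
      = l.length := by
    rw [Finset.card_image_of_injOn, Finset.card_range]
    intro a ha b hb hab
    simp only [Finset.coe_range, Set.mem_Iio] at ha hb
    have ha' := sp_le_head hl ha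
    have hb' := sp_le_head hl hb
    simp only at hab
    rcases lt_trichotomy a b with h | h | h
    · have := sp_getD_lt hl h hb; omega
    · exact h
    · have := sp_getD_lt hl h ha; omega
  have hsub2 : (Finset.range l.length).image (fun i => l.getD 0 0 - l.getD i 0)
      ⊆ Finset.range (l.getD 0 0) := by
    intro x hx
    obtain ⟨i, hi, rfl⟩ := Finset.mem_image.mp hx
    rw [Finset.mem_range] at hi ⊢
    have := sp_pos hl hi
    have := sp_pos hl hlenpos
    omega
  have h3 : (Finset.range (l.getD 0 0) \
      (Finset.range l.length).image (fun i => l.getD 0 0 - l.getD i 0)).card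
      = l.getD 0 0 - l.length := by
    rw [Finset.card_sdiff_of_subset hsub2, Finset.card_range, h2]
  have hdisj : Disjoint ((Finset.range l.length).image (fun i => l.getD 0 0 + l.getD i 0))
      (Finset.range (l.getD 0 0) \
        (Finset.range l.length).image (fun i => l.getD 0 0 - l.getD i 0)) := by
    rw [Finset.disjoint_left]
    intro x hx hx2
    obtain ⟨i, hi, rfl⟩ := Finset.mem_image.mp hx
    rw [Finset.mem_sdiff, Finset.mem_range] at hx2
    omega
  rw [Tset, Finset.card_union_of_disjoint hdisj, h1, h3]
  omega

lemma betaSet_dd {l : List ℕ} (hl : IsStrictPartition l) (hne : l ≠ []) :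
    betaSet (doubledDistinct l) = Tset l := by
  have hlenpos : 0 < l.length := List.length_pos_iff.mpr hne
  have hlM : l.length ≤ l.getD 0 0 := sp_len_le hl hne
  have hMpos : 0 < l.getD 0 0 := sp_pos hl hlenpos
  have hsub : betaSet (doubledDistinct l) ⊆ Tset l := by
    intro x hx
    obtain ⟨i, hi, hbi⟩ := Finset.mem_image.mp hx
    rw [Finset.mem_range, dd_length] at hi
    rw [betaFn, dd_length, dd_getD l hi] at hbi
    by_cases hil : i < l.length
    · rw [ddPart, if_pos hil] at hbi
      apply Finset.mem_union_left
      exact Finset.mem_image.mpr ⟨i, Finset.mem_range.mpr hil, by omega⟩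
    · push_neg at hil
      rw [ddPart, if_neg (by omega)] at hbi
      set c := ((Finset.range l.length).filter fun j => i + 1 ≤ l.getD j 0 + j).card with hc
      have hcl : c ≤ l.length := by
        calc c ≤ (Finset.range l.length).card := Finset.card_filter_le _ _
        _ = l.length := Finset.card_range _
      apply Finset.mem_union_right
      rw [Finset.mem_sdiff, Finset.mem_range]
      refine ⟨by omega, ?_⟩
      intro hmem
      obtain ⟨j, hj, hji⟩ := Finset.mem_image.mp hmem
      rw [Finset.mem_range] at hj
      have hjM : l.getD j 0 ≤ l.getD 0 0 := sp_le_head hl hj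
      have hjpos : 0 < l.getD j 0 := sp_pos hl hj
      have hkey : i + 1 = c + l.getD j 0 := by omega
      have hdc : ∀ u v, u ≤ v → v < l.length →
          i + 1 ≤ l.getD v 0 + v → i + 1 ≤ l.getD u 0 + u :=
        fun u v huv hv h => le_trans h (sp_wmono hl huv hv)
      have hS1 := filt_dc (fun t => i + 1 ≤ l.getD t 0 + t) hdc j hj
      rw [← hc] at hS1
      by_cases h : j < c
      · have := hS1.mpr h
        omega
      · have h5 : ¬ (i + 1 ≤ l.getD j 0 + j) := by
          rw [hS1]
          exact h
        omega
  apply Finset.eq_of_subset_of_card_le hsub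
  rw [Tset_card hl hne]
  have hBcard : (betaSet (doubledDistinct l)).card = l.getD 0 0 := by
    rw [betaSet, Finset.card_image_of_injOn, Finset.card_range, dd_length]
    intro a ha b hb hab
    simp only [Finset.coe_range, Set.mem_Iio, dd_length] at ha hb
    rcases lt_trichotomy a b with h | h | h
    · have := betaFn_gap (doubledDistinct l) (dd_mono hl) a b (le_of_lt h)
        (by rw [dd_length]; exact hb)
      omega
    · exact h
    · have := betaFn_gap (doubledDistinct l) (dd_mono hl) b a (le_of_lt h)
        (by rw [dd_length]; exact ha)
      omega
  omega

lemma mem_Tset {l : List ℕ} (hl : IsStrictPartition l) (x : ℕ) :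
    x ∈ Tset l ↔ (∃ a ∈ l, x = l.getD 0 0 + a) ∨
      (x < l.getD 0 0 ∧ ∀ a ∈ l, x + a ≠ l.getD 0 0) := by
  rw [Tset, Finset.mem_union, Finset.mem_sdiff, Finset.mem_range]
  constructor
  · rintro (h | ⟨h1, h2⟩)
    · obtain ⟨i, hi, rfl⟩ := Finset.mem_image.mp h
      rw [Finset.mem_range] at hi
      exact Or.inl ⟨l.getD i 0, (sp_mem_iff _).mpr ⟨i, hi, rfl⟩, rfl⟩
    · refine Or.inr ⟨h1, ?_⟩
      intro a ha hxa
      apply h2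
      obtain ⟨i, hi, rfl⟩ := (sp_mem_iff a).mp ha
      exact Finset.mem_image.mpr ⟨i, Finset.mem_range.mpr hi, by omega⟩
  · rintro (⟨a, ha, rfl⟩ | ⟨h1, h2⟩)
    · obtain ⟨i, hi, rfl⟩ := (sp_mem_iff a).mp ha
      exact Or.inl (Finset.mem_image.mpr ⟨i, Finset.mem_range.mpr hi, rfl⟩)
    · refine Or.inr ⟨h1, ?_⟩
      intro hmem
      obtain ⟨i, hi, hix⟩ := Finset.mem_image.mp hmem
      rw [Finset.mem_range] at hi
      have hle := sp_le_head hl hi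
      exact h2 (l.getD i 0) ((sp_mem_iff _).mpr ⟨i, hi, rfl⟩) (by omega)

def Pone (l : List ℕ) (s : ℕ) : Prop := ∀ a ∈ l, ∀ b ∈ l, s ≠ a + b

def Ptwo (l : List ℕ) (s : ℕ) : Prop := ∀ a ∈ l, s ≤ a → a - s ∈ l

lemma T_cond_iff_P {l : List ℕ} (hl : IsStrictPartition l) (hne : l ≠ [])
    {s : ℕ} (hs : 0 < s) :
    (∀ x ∈ Tset l, s ≤ x → x - s ∈ Tset l) ↔ Pone l s ∧ Ptwo l s := by
  have hMpos : 0 < l.getD 0 0 := sp_pos hl (List.length_pos_iff.mpr hne)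
  constructor
  · intro hT
    constructor
    · intro a ha b hb hab
      have haM := sp_mem_le_head hl ha
      have hbM := sp_mem_le_head hl hb
      have hbpos := hl.2 b hb
      have hx : l.getD 0 0 + a ∈ Tset l := (mem_Tset hl _).mpr (Or.inl ⟨a, ha, rfl⟩)
      have hy := hT _ hx (by omega)
      rw [mem_Tset hl] at hy
      rcases hy with ⟨c, hc, hceq⟩ | ⟨h1, h2⟩
      · have hcpos := hl.2 c hc
        omega
      · exact h2 b hb (by omega)
    · intro a ha hsa
      have hx : l.getD 0 0 + a ∈ Tset l := (mem_Tset hl _).mpr (Or.inl ⟨a, ha, rfl⟩)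
      have hy := hT _ hx (by omega)
      rw [mem_Tset hl] at hy
      rcases hy with ⟨c, hc, hceq⟩ | ⟨h1, h2⟩
      · have : a - s = c := by omega
        rw [this]
        exact hc
      · omega
  · rintro ⟨hP1, hP2⟩ x hx hsx
    rw [mem_Tset hl] at hx ⊢
    rcases hx with ⟨a, ha, rfl⟩ | ⟨h1, h2⟩
    · have haM := sp_mem_le_head hl ha
      by_cases hsa : s ≤ a
      · exact Or.inl ⟨a - s, hP2 a ha hsa, by omega⟩
      · refine Or.inr ⟨by omega, ?_⟩
        intro b hb hbeq
        exact hP1 a ha b hb (by omega)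
    · refine Or.inr ⟨by omega, ?_⟩
      intro b hb hbeq
      have hsb : s < b := by omega
      have hbs := hP2 b hb (le_of_lt hsb)
      exact h2 (b - s) hbs (by omega)

lemma barcore_iff_P {l : List ℕ} (hl : IsStrictPartition l) {s : ℕ} (hs : 0 < s) :
    (IsBarCore l s ∧ (Even s → s / 2 ∉ l)) ↔ Pone l s ∧ Ptwo l s := by
  constructor
  · rintro ⟨hbc, hev⟩
    have haux : ∀ a b, a ∈ l → b ∈ l → b < a → s ≠ a + b := by
      intro a b ha hb hba hab
      obtain ⟨i, hi, hia⟩ := (sp_mem_iff a).mp ha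
      obtain ⟨j, hj, hjb⟩ := (sp_mem_iff b).mp hb
      have hij : i < j := by
        rcases lt_trichotomy i j with h | h | h
        · exact h
        · subst h; omega
        · have := sp_getD_lt hl h hi; omega
      apply hbc i hi
      exact Finset.mem_union_left _
        (Finset.mem_image.mpr ⟨j, Finset.mem_Ioo.mpr ⟨hij, hj⟩, by omega⟩)
    constructor
    · intro a ha b hb hab
      rcases lt_trichotomy a b with h | h | h
      · exact haux b a hb ha h (by omega)
      · apply hev ⟨a, by omega⟩
        have : s / 2 = a := by omega
        rw [this]
        exact ha
      · exact haux a b ha hb h hab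
    · intro a ha hsa
      obtain ⟨i, hi, hia⟩ := (sp_mem_iff a).mp ha
      have hcore := hbc i hi
      rw [barLengths, Finset.mem_union, not_or, Finset.mem_sdiff, not_and, not_not] at hcore
      obtain ⟨h1, h2⟩ := hcore
      have h3 := h2 (Finset.mem_Icc.mpr ⟨hs, by omega⟩)
      obtain ⟨j, hj, hji⟩ := Finset.mem_image.mp h3
      rw [Finset.mem_Ioo] at hj
      have hlt := sp_getD_lt hl hj.1 hj.2
      have hjpos := sp_pos hl hj.2
      have : a - s = l.getD j 0 := by omega
      rw [this]
      exact (sp_mem_iff _).mpr ⟨j, hj.2, rfl⟩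
  · rintro ⟨hP1, hP2⟩
    constructor
    · intro i hi hmem
      rw [barLengths, Finset.mem_union] at hmem
      rcases hmem with h | h
      · obtain ⟨j, hj, hji⟩ := Finset.mem_image.mp h
        rw [Finset.mem_Ioo] at hj
        exact hP1 _ ((sp_mem_iff _).mpr ⟨i, hi, rfl⟩) _
          ((sp_mem_iff _).mpr ⟨j, hj.2, rfl⟩) (by omega)
      · rw [Finset.mem_sdiff, Finset.mem_Icc] at h
        obtain ⟨⟨hs1, hs2⟩, hnimg⟩ := h
        have hmem2 := hP2 (l.getD i 0) ((sp_mem_iff _).mpr ⟨i, hi, rfl⟩) hs2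
        obtain ⟨j, hj, hjeq⟩ := (sp_mem_iff _).mp hmem2
        have hjpos := sp_pos hl hj
        have hij : i < j := by
          rcases lt_trichotomy i j with h | h | h
          · exact h
          · subst h; omega
          · have := sp_getD_lt hl h hi; omega
        exact hnimg (Finset.mem_image.mpr ⟨j, Finset.mem_Ioo.mpr ⟨hij, hj⟩, by omega⟩)
    · rintro ⟨r, hr⟩ hs2
      exact hP1 (s / 2) hs2 (s / 2) hs2 (by omega)

/-- For a strict partition `λ` and a positive integer `s`, the doubled distinct
partition `λλ` is a doubled distinct `s`-core iff `λ` is an `s̄`-core and, when `s` is even,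
`s/2` is not a part of `λ`. -/
theorem doubled_distinct_core_iff (l : List ℕ) (hl : IsStrictPartition l) (s : ℕ)
    (hs : 0 < s) :
    IsCore (doubledDistinct l) s ↔ IsBarCore l s ∧ (Even s → s / 2 ∉ l) := by
  by_cases hne : l = []
  · subst hne
    constructor
    · intro _
      refine ⟨fun i hi => by simp at hi, fun _ h => by simp at h⟩
    · intro _ i j hi hj
      simp [doubledDistinct] at hi
  · rw [core_iff_beta (doubledDistinct l) s hs (dd_mono hl), betaSet_dd hl hne]
    rw [T_cond_iff_P hl hne hs, barcore_iff_P hl hs]
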